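/- arXiv:2402.01906 — 7 statements merged into one kernel-verified Lean document; each statement's English description precedes it below -/
import Mathlib

section
/- Let A be an AL-monoid and I an ideal. The relation a ≡ b iff a∗b ∈ I is a congruence: if a∗b ∈ I and c∗d ∈ I then (a+c)∗(b+d) ∈ I, (a∨c)∗(b∨d) ∈ I, (a∧c)∗(b∧d) ∈ I, and (a∗c)∗(b∗d) ∈ I. -/
/-- An AL-monoid: a commutative lattice-ordered monoid with an autometric
operation `mstar` satisfying the metric axioms, `a∗(a⊓b)+b = a⊔b`,
contraction of all operations, and `(a∗(a⊔b)) ⊓ (b∗(a⊔b)) = 0`. -/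
class ALMonoid (A : Type*) extends AddCommMonoid A, Lattice A where
  mstar : A → A → A
  add_le_add_left' : ∀ a b : A, a ≤ b → ∀ c : A, c + a ≤ c + b
  mstar_inf_add : ∀ a b : A, mstar a (a ⊓ b) + b = a ⊔ b
  add_contract : ∀ a x y : A, mstar (a + x) (a + y) ≤ mstar x y
  sup_contract : ∀ a x y : A, mstar (a ⊔ x) (a ⊔ y) ≤ mstar x y
  inf_contract : ∀ a x y : A, mstar (a ⊓ x) (a ⊓ y) ≤ mstar x y
  mstar_contract : ∀ a x y : A, mstar (mstar a x) (mstar a y) ≤ mstar x y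
  inf_mstar_sup_eq_zero : ∀ a b : A, mstar a (a ⊔ b) ⊓ mstar b (a ⊔ b) = 0
  mstar_nonneg : ∀ a b : A, 0 ≤ mstar a b
  mstar_eq_zero_iff : ∀ a b : A, mstar a b = 0 ↔ a = b
  mstar_comm : ∀ a b : A, mstar a b = mstar b a
  mstar_triangle : ∀ a b c : A, mstar a b ≤ mstar a c + mstar c b

open ALMonoid

/-- An ideal of an AL-monoid: a nonempty subset closed under `+` and
downward closed. -/
def IsIdeal {A : Type*} [ALMonoid A] (I : Set A) : Prop :=
  I.Nonempty ∧ (∀ a ∈ I, ∀ b ∈ I, a + b ∈ I) ∧ ∀ a ∈ I, ∀ b : A, b ≤ a → b ∈ I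

variable {A : Type*} [ALMonoid A]

theorem stmt3 (I : Set A) (hI : IsIdeal I) (a b c d : A)
    (hab : mstar a b ∈ I) (hcd : mstar c d ∈ I) :
    mstar (a + c) (b + d) ∈ I ∧ mstar (a ⊔ c) (b ⊔ d) ∈ I ∧
    mstar (a ⊓ c) (b ⊓ d) ∈ I ∧ mstar (mstar a c) (mstar b d) ∈ I := by
  haveI : AddLeftMono A := ⟨fun c a b h => add_le_add_left' a b h c⟩
  haveI : AddRightMono A := ⟨fun c a b h => by
    simpa only [Function.swap, add_comm] using add_le_add_left' a b h c⟩
  obtain ⟨-, hadd, hdown⟩ := hI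
  have key : ∀ (op : A → A → A), (∀ x y, op x y = op y x) →
      (∀ a x y : A, mstar (op a x) (op a y) ≤ mstar x y) →
      mstar (op a c) (op b d) ∈ I := by
    intro op hcomm hcontr
    refine hdown _ (hadd _ hab _ hcd) _ ?_
    calc mstar (op a c) (op b d)
        ≤ mstar (op a c) (op b c) + mstar (op b c) (op b d) := mstar_triangle _ _ _
      _ ≤ mstar a b + mstar c d := by
          refine add_le_add ?_ (hcontr b c d)
          rw [hcomm a c, hcomm b c]; exact hcontr c a b
  exact ⟨key _ add_comm add_contract, key _ sup_comm sup_contract,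
    key _ inf_comm inf_contract, key _ mstar_comm mstar_contract⟩
end

section
/- An AL-monoid A is a chain (totally ordered) if and only if for all a, b ∈ A, a∧b = 0 implies a = 0 or b = 0. -/
open ALMonoid

variable {A : Type*} [ALMonoid A]

theorem stmt11 (hbot : ∀ a : A, (0 : A) ≤ a) :
    (∀ a b : A, a ≤ b ∨ b ≤ a) ↔ (∀ a b : A, a ⊓ b = 0 → a = 0 ∨ b = 0) := by
  constructor
  · intro h a b hab
    rcases h a b with hle | hle
    · left; rw [inf_eq_left.mpr hle] at hab; exact hab
    · right; rw [inf_eq_right.mpr hle] at hab; exact hab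
  · intro h a b
    rcases h _ _ (inf_mstar_sup_eq_zero a b) with h0 | h0
    · right
      have : a = a ⊔ b := (mstar_eq_zero_iff a (a ⊔ b)).mp h0
      exact le_sup_right.trans this.ge
    · left
      have : b = a ⊔ b := (mstar_eq_zero_iff b (a ⊔ b)).mp h0
      exact le_sup_left.trans this.ge
end

section
/- Let A be an AL-monoid and M a strong ideal of A. The quotient A/M (with elements a∗M and operations defined componentwise via representatives) is a chain AL-monoid if and only if M is a prime ideal. -/
open ALMonoid

variable {A : Type*} [ALMonoid A]

/-- A strong ideal: `a ∈ I ↔ a∗I = I` and `a∗I = b∗I ↔ a∗b ∈ I`. -/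
def IsStrongIdeal (I : Set A) : Prop :=
  IsIdeal I ∧ (∀ a : A, a ∈ I ↔ mstar a '' I = I) ∧
  (∀ a b : A, mstar a '' I = mstar b '' I ↔ mstar a b ∈ I)

/-- The order on the quotient `A/M`: `a∗M ≤ b∗M` iff some representatives
`a' ≡ a`, `b' ≡ b` satisfy `a' ≤ b'`. -/
def qle (M : Set A) (a b : A) : Prop :=
  ∃ a' b' : A, mstar a a' ∈ M ∧ mstar b b' ∈ M ∧ a' ≤ b'

theorem stmt12 (hbot : ∀ a : A, (0 : A) ≤ a) (M : Set A)
    (hM : IsStrongIdeal M) :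
    (∀ a b : A, qle M a b ∨ qle M b a) ↔
      (∀ a b : A, a ⊓ b ∈ M → a ∈ M ∨ b ∈ M) := by
  obtain ⟨⟨⟨x, hx⟩, hadd, hdown⟩, hstr1, hstr2⟩ := hM
  have h0 : (0 : A) ∈ M := hdown x hx 0 (hbot x)
  -- transfer along equivalence
  have memtrans : ∀ a b : A, mstar a b ∈ M → b ∈ M → a ∈ M := by
    intro a b hab hb
    exact (hstr1 a).mpr (((hstr2 a b).mpr hab).trans ((hstr1 b).mp hb))
  constructor
  · intro hchain a b hab
    rcases hchain a b with ⟨a', b', ha, hb, hle⟩ | ⟨b', a', hb, ha, hle⟩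
    · left
      have h1 : mstar (a ⊓ b) (a' ⊓ b) ≤ mstar a a' := by
        rw [inf_comm a b, inf_comm a' b]; exact inf_contract b a a'
      have h2 : mstar (a' ⊓ b) (a' ⊓ b') ≤ mstar b b' := inf_contract a' b b'
      have h3 : mstar (a ⊓ b) a' ≤ mstar a a' + mstar b b' := by
        have := mstar_triangle (a ⊓ b) (a' ⊓ b') (a' ⊓ b)
        rw [inf_eq_left.mpr hle] at this
        calc mstar (a ⊓ b) a' ≤ mstar (a ⊓ b) (a' ⊓ b) + mstar (a' ⊓ b) a' := this
          _ ≤ mstar a a' + mstar (a' ⊓ b) a' := by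
              have := add_le_add_left' _ _ h1 (mstar (a' ⊓ b) a')
              simpa [add_comm] using this
          _ ≤ mstar a a' + mstar b b' := by
              have h2' : mstar (a' ⊓ b) a' ≤ mstar b b' := by
                rw [inf_eq_left.mpr hle] at h2; exact h2
              exact add_le_add_left' _ _ h2' _
      have ha'M : a' ∈ M := by
        have hm : mstar (a ⊓ b) a' ∈ M := hdown _ (hadd _ ha _ hb) _ h3
        exact memtrans a' (a ⊓ b) (by rwa [mstar_comm]) hab
      exact memtrans a a' ha ha'M
    · right
      have h1 : mstar (a ⊓ b) (a ⊓ b') ≤ mstar b b' := inf_contract a b b'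
      have h2 : mstar (a ⊓ b') (a' ⊓ b') ≤ mstar a a' := by
        rw [inf_comm a b', inf_comm a' b']; exact inf_contract b' a a'
      have h3 : mstar (a ⊓ b) b' ≤ mstar b b' + mstar a a' := by
        have heq : a' ⊓ b' = b' := inf_eq_right.mpr hle
        have := mstar_triangle (a ⊓ b) (a' ⊓ b') (a ⊓ b')
        rw [heq] at this
        calc mstar (a ⊓ b) b' ≤ mstar (a ⊓ b) (a ⊓ b') + mstar (a ⊓ b') b' := this
          _ ≤ mstar b b' + mstar (a ⊓ b') b' := by
              have := add_le_add_left' _ _ h1 (mstar (a ⊓ b') b')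
              simpa [add_comm] using this
          _ ≤ mstar b b' + mstar a a' := by
              have h2' : mstar (a ⊓ b') b' ≤ mstar a a' := by
                rw [heq] at h2; exact h2
              exact add_le_add_left' _ _ h2' _
      have hb'M : b' ∈ M := by
        have hm : mstar (a ⊓ b) b' ∈ M := hdown _ (hadd _ hb _ ha) _ h3
        exact memtrans b' (a ⊓ b) (by rwa [mstar_comm]) hab
      exact memtrans b b' hb hb'M
  · intro hprime a b
    have hz : mstar a (a ⊔ b) ⊓ mstar b (a ⊔ b) ∈ M := by
      rw [inf_mstar_sup_eq_zero]; exact h0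
    rcases hprime _ _ hz with h | h
    · right
      exact ⟨b, a ⊔ b, by rw [(mstar_eq_zero_iff b b).mpr rfl] at *; exact h0, h,
        le_sup_right⟩
    · left
      exact ⟨a, a ⊔ b, by rw [(mstar_eq_zero_iff a a).mpr rfl] at *; exact h0, h,
        le_sup_left⟩
end

section
/- Let A be an AL-monoid and P a strong prime ideal of A. Then the set of ideals of A containing P is a chain under inclusion. -/
open ALMonoid

variable {A : Type*} [ALMonoid A]

theorem stmt13 (hbot : ∀ a : A, (0 : A) ≤ a) (P : Set A)
    (hP : IsStrongIdeal P)
    (hprime : ∀ a b : A, a ⊓ b ∈ P → a ∈ P ∨ b ∈ P) :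
    IsChain (· ⊆ ·) {I : Set A | IsIdeal I ∧ P ⊆ I} := by
  rintro I ⟨hI, hPI⟩ J ⟨hJ, hPJ⟩ _
  by_contra hcon
  push_neg at hcon
  obtain ⟨hIJ, hJI⟩ := hcon
  obtain ⟨a, haI, haJ⟩ := Set.not_subset.mp hIJ
  obtain ⟨b, hbJ, hbI⟩ := Set.not_subset.mp hJI
  obtain ⟨p, hp⟩ := hP.1.1
  have h0P : (0 : A) ∈ P := hP.1.2.2 p hp 0 (hbot p)
  have hsup : ∀ c : A, c ≤ a ⊔ b → a ⊔ b = mstar c (a ⊔ b) + c := by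
    intro c hc
    have h := mstar_inf_add (a ⊔ b) c
    rw [inf_eq_right.mpr hc, sup_eq_left.mpr hc, mstar_comm] at h
    exact h.symm
  have hmem : mstar a (a ⊔ b) ⊓ mstar b (a ⊔ b) ∈ P := by
    rw [inf_mstar_sup_eq_zero]; exact h0P
  rcases hprime _ _ hmem with hc | hc
  · have hsI : a ⊔ b ∈ I := by
      rw [hsup a le_sup_left]
      exact hI.2.1 _ (hPI hc) _ haI
    exact hbI (hI.2.2 _ hsI b le_sup_right)
  · have hsJ : a ⊔ b ∈ J := by
      rw [hsup b le_sup_right]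
      exact hJ.2.1 _ (hPJ hc) _ hbJ
    exact haJ (hJ.2.2 _ hsJ a le_sup_left)
end

section
/- Let A be an AL-monoid and P, Q prime ideals with P ⊄ Q and Q ⊄ P. Then there exist elements u, v ∈ A with u ∉ Q, v ∉ P, and u∧v = 0; consequently the basic open sets S(u) = {prime R | u ∉ R} and S(v) separate P and Q in the spectral topology on Spec(A). -/
open ALMonoid

variable {A : Type*} [ALMonoid A]

/-- A prime ideal: an ideal with `a ⊓ b ∈ P → a ∈ P ∨ b ∈ P`. -/
def IsPrimeIdeal (P : Set A) : Prop :=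
  IsIdeal P ∧ ∀ a b : A, a ⊓ b ∈ P → a ∈ P ∨ b ∈ P

theorem stmt14 (hbot : ∀ a : A, (0 : A) ≤ a) (P Q : Set A)
    (hP : IsPrimeIdeal P) (hQ : IsPrimeIdeal Q)
    (hPQ : ¬ P ⊆ Q) (hQP : ¬ Q ⊆ P) :
    ∃ u v : A, u ∉ Q ∧ v ∉ P ∧ u ⊓ v = 0 ∧
      Q ∈ {R : Set A | IsPrimeIdeal R ∧ u ∉ R} ∧
      P ∈ {R : Set A | IsPrimeIdeal R ∧ v ∉ R} ∧
      {R : Set A | IsPrimeIdeal R ∧ u ∉ R} ∩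
        {R : Set A | IsPrimeIdeal R ∧ v ∉ R} = ∅ := by
  obtain ⟨a, haP, haQ⟩ := Set.not_subset.mp hPQ
  obtain ⟨b, hbQ, hbP⟩ := Set.not_subset.mp hQP
  -- u avoids Q, v avoids P
  refine ⟨mstar b (a ⊔ b), mstar a (a ⊔ b), ?_, ?_, ?_, ?_, ?_, ?_⟩
  · -- mstar b (a ⊔ b) ∉ Q, since a ≤ mstar b (a⊔b) + b
    intro hu
    have key : mstar a (a ⊓ b) ≤ mstar b (a ⊔ b) := by
      have h := inf_contract a b (a ⊔ b)
      rw [inf_sup_self] at h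
      rw [mstar_comm a (a ⊓ b)]; exact h
    have hle : a ≤ mstar b (a ⊔ b) + b := by
      calc a ≤ a ⊔ b := le_sup_left
        _ = mstar a (a ⊓ b) + b := (mstar_inf_add a b).symm
        _ = b + mstar a (a ⊓ b) := add_comm _ _
        _ ≤ b + mstar b (a ⊔ b) := add_le_add_left' _ _ key b
        _ = mstar b (a ⊔ b) + b := add_comm _ _
    exact haQ (hQ.1.2.2 _ (hQ.1.2.1 _ hu _ hbQ) a hle)
  · -- mstar a (a ⊔ b) ∉ P, since b ≤ mstar a (a⊔b) + a
    intro hv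
    have key : mstar b (b ⊓ a) ≤ mstar a (a ⊔ b) := by
      have h := inf_contract b a (a ⊔ b)
      rw [inf_eq_left.mpr (le_sup_right : b ≤ a ⊔ b)] at h
      rw [mstar_comm b (b ⊓ a)]; exact h
    have hle : b ≤ mstar a (a ⊔ b) + a := by
      calc b ≤ b ⊔ a := le_sup_left
        _ = mstar b (b ⊓ a) + a := (mstar_inf_add b a).symm
        _ = a + mstar b (b ⊓ a) := add_comm _ _
        _ ≤ a + mstar a (a ⊔ b) := add_le_add_left' _ _ key a
        _ = mstar a (a ⊔ b) + a := add_comm _ _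
    exact hbP (hP.1.2.2 _ (hP.1.2.1 _ hv _ haP) b hle)
  · rw [inf_comm]; exact inf_mstar_sup_eq_zero a b
  · refine ⟨hQ, ?_⟩
    intro hu
    have key : mstar a (a ⊓ b) ≤ mstar b (a ⊔ b) := by
      have h := inf_contract a b (a ⊔ b)
      rw [inf_sup_self] at h
      rw [mstar_comm a (a ⊓ b)]; exact h
    have hle : a ≤ mstar b (a ⊔ b) + b := by
      calc a ≤ a ⊔ b := le_sup_left
        _ = mstar a (a ⊓ b) + b := (mstar_inf_add a b).symm
        _ = b + mstar a (a ⊓ b) := add_comm _ _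
        _ ≤ b + mstar b (a ⊔ b) := add_le_add_left' _ _ key b
        _ = mstar b (a ⊔ b) + b := add_comm _ _
    exact haQ (hQ.1.2.2 _ (hQ.1.2.1 _ hu _ hbQ) a hle)
  · refine ⟨hP, ?_⟩
    intro hv
    have key : mstar b (b ⊓ a) ≤ mstar a (a ⊔ b) := by
      have h := inf_contract b a (a ⊔ b)
      rw [inf_eq_left.mpr (le_sup_right : b ≤ a ⊔ b)] at h
      rw [mstar_comm b (b ⊓ a)]; exact h
    have hle : b ≤ mstar a (a ⊔ b) + a := by
      calc b ≤ b ⊔ a := le_sup_left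
        _ = mstar b (b ⊓ a) + a := (mstar_inf_add b a).symm
        _ = a + mstar b (b ⊓ a) := add_comm _ _
        _ ≤ a + mstar a (a ⊔ b) := add_le_add_left' _ _ key a
        _ = mstar a (a ⊔ b) + a := add_comm _ _
    exact hbP (hP.1.2.2 _ (hP.1.2.1 _ hv _ haP) b hle)
  · ext R
    simp only [Set.mem_inter_iff, Set.mem_setOf_eq, Set.mem_empty_iff_false, iff_false]
    rintro ⟨⟨hR, huR⟩, ⟨_, hvR⟩⟩
    obtain ⟨x, hx⟩ := hR.1.1
    have h0 : (0 : A) ∈ R := hR.1.2.2 x hx 0 (hbot x)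
    have : mstar b (a ⊔ b) ⊓ mstar a (a ⊔ b) ∈ R := by
      rw [inf_comm, inf_mstar_sup_eq_zero a b]; exact h0
    rcases hR.2 _ _ this with h | h
    · exact huR h
    · exact hvR h
end

section
/- Let A be an AL-monoid and X ⊆ Spec(A) a set of pairwise incomparable prime ideals. Then X with the subspace spectral topology is a Hausdorff (T₂) space. -/
open ALMonoid

variable {A : Type*} [ALMonoid A]

lemma aux_mstar_zero_right (hbot : ∀ a : A, (0 : A) ≤ a) (b : A) : mstar b 0 = b := by
  have h := mstar_inf_add b (0 : A)
  rwa [inf_eq_right.mpr (hbot b), sup_eq_left.mpr (hbot b), add_zero] at h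

lemma aux_le_add_mstar (hbot : ∀ a : A, (0 : A) ≤ a) (a b : A) :
    b ≤ a + mstar a (a ⊔ b) := by
  have h := mstar_triangle (0 : A) (a ⊔ b) a
  rw [mstar_comm (0 : A) (a ⊔ b), aux_mstar_zero_right hbot,
      mstar_comm (0 : A) a, aux_mstar_zero_right hbot] at h
  exact le_trans le_sup_right h

lemma aux_zero_mem (hbot : ∀ a : A, (0 : A) ≤ a) {I : Set A} (hI : IsIdeal I) :
    (0 : A) ∈ I := by
  obtain ⟨x, hx⟩ := hI.1
  exact hI.2.2 x hx 0 (hbot x)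

theorem stmt15 (hbot : ∀ a : A, (0 : A) ≤ a)
    (X : Set {P : Set A // IsPrimeIdeal P})
    (hX : ∀ P ∈ X, ∀ Q ∈ X, P ≠ Q → ¬ P.1 ⊆ Q.1 ∧ ¬ Q.1 ⊆ P.1) :
    @T2Space X (TopologicalSpace.induced Subtype.val
      (TopologicalSpace.generateFrom
        {U : Set {P : Set A // IsPrimeIdeal P} |
          ∃ a : A, U = {P : {P : Set A // IsPrimeIdeal P} | a ∉ P.1}})) := by
  letI τ := TopologicalSpace.generateFrom
        {U : Set {P : Set A // IsPrimeIdeal P} |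
          ∃ a : A, U = {P : {P : Set A // IsPrimeIdeal P} | a ∉ P.1}}
  letI τ' := TopologicalSpace.induced (Subtype.val : X → {P : Set A // IsPrimeIdeal P}) τ
  refine @T2Space.mk X τ' ?_
  rintro ⟨⟨P, hP⟩, hPX⟩ ⟨⟨Q, hQ⟩, hQX⟩ hne
  have hPQ : (⟨P, hP⟩ : {P : Set A // IsPrimeIdeal P}) ≠ ⟨Q, hQ⟩ := by
    intro h
    exact hne (Subtype.ext h)
  obtain ⟨hns, hns'⟩ := hX _ hPX _ hQX hPQ
  obtain ⟨a, haP, haQ⟩ := Set.not_subset.mp hns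
  obtain ⟨b, hbQ, hbP⟩ := Set.not_subset.mp hns'
  set v := mstar a (a ⊔ b) with hv
  set u := mstar b (a ⊔ b) with hu
  have haub : a ≤ b + u := by
    have h := aux_le_add_mstar hbot b a
    rwa [sup_comm b a] at h
  have hbuv : b ≤ a + v := aux_le_add_mstar hbot a b
  have hvP : v ∉ P := fun h =>
    hbP (hP.1.2.2 _ (hP.1.2.1 a haP v h) b hbuv)
  have huQ : u ∉ Q := fun h =>
    haQ (hQ.1.2.2 _ (hQ.1.2.1 b hbQ u h) a haub)
  have huv : v ⊓ u = 0 := inf_mstar_sup_eq_zero a b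
  refine ⟨Subtype.val ⁻¹' {R : {P : Set A // IsPrimeIdeal P} | v ∉ R.1},
          Subtype.val ⁻¹' {R : {P : Set A // IsPrimeIdeal P} | u ∉ R.1},
          ?_, ?_, hvP, huQ, ?_⟩
  · exact isOpen_induced_iff.mpr ⟨_, TopologicalSpace.GenerateOpen.basic _ ⟨v, rfl⟩, rfl⟩
  · exact isOpen_induced_iff.mpr ⟨_, TopologicalSpace.GenerateOpen.basic _ ⟨u, rfl⟩, rfl⟩
  · rw [Set.disjoint_left]
    rintro ⟨⟨R, hR⟩, _⟩ hvR huR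
    have h0 : (0 : A) ∈ R := aux_zero_mem hbot hR.1
    have := hR.2 v u (by rw [huv]; exact h0)
    exact this.elim hvR huR
end

section
/- Let A and B be AL-monoids and α : A → B a homomorphism. Then ker(α) = {a ∈ A | α(a) = 0} is a prime ideal of A if and only if the image of α is a chain (totally ordered) sub-AL-monoid of B. -/
open ALMonoid

variable {A : Type*} [ALMonoid A]

/-- A homomorphism of AL-monoids preserves `+`, `mstar`, `⊔`, `⊓` and `0`. -/
def IsHom {A B : Type*} [ALMonoid A] [ALMonoid B] (f : A → B) : Prop :=
  (∀ a b : A, f (a + b) = f a + f b) ∧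
  (∀ a b : A, f (mstar a b) = mstar (f a) (f b)) ∧
  (∀ a b : A, f (a ⊔ b) = f a ⊔ f b) ∧
  (∀ a b : A, f (a ⊓ b) = f a ⊓ f b) ∧
  f 0 = 0

theorem stmt16 {B : Type*} [ALMonoid B] (hbot : ∀ a : A, (0 : A) ≤ a)
    (α : A → B) (hα : IsHom α) :
    IsPrimeIdeal {a : A | α a = 0} ↔
      ∀ x ∈ Set.range α, ∀ y ∈ Set.range α, x ≤ y ∨ y ≤ x := by
  obtain ⟨hadd, hms, hsup, hinf, h0⟩ := hα
  have hmono : ∀ a b : A, a ≤ b → α a ≤ α b := by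
    intro a b h
    have h1 : α a ⊔ α b = α b := by rw [← hsup, sup_eq_right.mpr h]
    calc α a ≤ α a ⊔ α b := le_sup_left
      _ = α b := h1
  have hpos : ∀ a : A, (0 : B) ≤ α a := by
    intro a
    have := hmono 0 a (hbot a)
    rwa [h0] at this
  have hideal : IsIdeal {a : A | α a = 0} := by
    refine ⟨⟨0, h0⟩, ?_, ?_⟩
    · intro a ha b hb
      simp only [Set.mem_setOf_eq] at *
      rw [hadd, ha, hb, add_zero]
    · intro a ha b hb
      simp only [Set.mem_setOf_eq] at *
      have : α b ≤ 0 := ha ▸ hmono b a hb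
      exact le_antisymm this (hpos b)
  constructor
  · rintro ⟨_, hprime⟩ x ⟨a, rfl⟩ y ⟨b, rfl⟩
    have hz : mstar a (a ⊔ b) ⊓ mstar b (a ⊔ b) ∈ {a : A | α a = 0} := by
      simp only [Set.mem_setOf_eq, inf_mstar_sup_eq_zero, h0]
    rcases hprime _ _ hz with h | h
    · right
      simp only [Set.mem_setOf_eq, hms, hsup] at h
      have := (mstar_eq_zero_iff (α a) (α a ⊔ α b)).mp h
      calc α b ≤ α a ⊔ α b := le_sup_right
        _ = α a := this.symm
    · left
      simp only [Set.mem_setOf_eq, hms, hsup] at h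
      have := (mstar_eq_zero_iff (α b) (α a ⊔ α b)).mp h
      calc α a ≤ α a ⊔ α b := le_sup_left
        _ = α b := this.symm
  · intro hchain
    refine ⟨hideal, ?_⟩
    intro a b hab
    simp only [Set.mem_setOf_eq, hinf] at hab
    rcases hchain (α a) ⟨a, rfl⟩ (α b) ⟨b, rfl⟩ with h | h
    · left
      have : α a ⊓ α b = α a := inf_eq_left.mpr h
      simpa [Set.mem_setOf_eq, this] using hab
    · right
      have : α a ⊓ α b = α b := inf_eq_right.mpr h
      simpa [Set.mem_setOf_eq, this] using hab
end
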